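/- arXiv:math/0306319 — 11 statements merged into one kernel-verified Lean document; each statement's English description precedes it below -/
import Mathlib

section
/- Let H be an inner product space over ℝ or ℂ, x₁,…,xₙ, y₁,…,yₙ ∈ H, and p₁,…,pₙ ≥ 0 with Σᵢ pᵢ = 1. If x, X ∈ H satisfy ‖xᵢ - (x + X)/2‖ ≤ (1/2)‖X - x‖ for all i, then |Σᵢ pᵢ⟨xᵢ, yᵢ⟩ - ⟨Σᵢ pᵢxᵢ, Σᵢ pᵢyᵢ⟩| ≤ (1/2)‖X - x‖ · Σᵢ pᵢ‖yᵢ - Σⱼ pⱼyⱼ‖. -/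
open scoped InnerProductSpace

theorem stmt4 {𝕜 : Type*} [RCLike 𝕜] {H : Type*} [NormedAddCommGroup H]
    [InnerProductSpace 𝕜 H] (n : ℕ) (x y : Fin n → H) (p : Fin n → ℝ)
    (hp : ∀ i, 0 ≤ p i) (hp1 : ∑ i, p i = 1) (a X : H)
    (hx : ∀ i, ‖x i - (2 : 𝕜)⁻¹ • (a + X)‖ ≤ ‖X - a‖ / 2) :
    ‖∑ i, (p i : 𝕜) * ⟪x i, y i⟫_𝕜 -
        ⟪∑ i, (p i : 𝕜) • x i, ∑ i, (p i : 𝕜) • y i⟫_𝕜‖ ≤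
      (1 / 2) * ‖X - a‖ * ∑ i, p i * ‖y i - ∑ j, (p j : 𝕜) • y j‖ := by
  set c : H := (2 : 𝕜)⁻¹ • (a + X) with hc
  set yb : H := ∑ j, (p j : 𝕜) • y j with hyb
  have hps : (∑ i, ((p i : 𝕜))) = 1 := by
    rw [← RCLike.ofReal_sum, hp1]; simp
  have key : ∑ i, (p i : 𝕜) * ⟪x i, y i⟫_𝕜 -
      ⟪∑ i, (p i : 𝕜) • x i, yb⟫_𝕜 = ∑ i, (p i : 𝕜) * ⟪x i - c, y i - yb⟫_𝕜 := by
    have h1 : ⟪∑ i, (p i : 𝕜) • x i, yb⟫_𝕜 = ∑ i, (p i : 𝕜) * ⟪x i, yb⟫_𝕜 := by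
      rw [sum_inner]
      simp [inner_smul_left, RCLike.conj_ofReal]
    have h2 : ∑ i, (p i : 𝕜) * ⟪c, y i⟫_𝕜 = ⟪c, yb⟫_𝕜 := by
      rw [hyb, inner_sum]
      simp [inner_smul_right]
    have h3 : ∑ i, (p i : 𝕜) * ⟪c, yb⟫_𝕜 = ⟪c, yb⟫_𝕜 := by
      rw [← Finset.sum_mul, hps, one_mul]
    calc ∑ i, (p i : 𝕜) * ⟪x i, y i⟫_𝕜 - ⟪∑ i, (p i : 𝕜) • x i, yb⟫_𝕜
        = ∑ i, (p i : 𝕜) * ⟪x i, y i⟫_𝕜 - ∑ i, (p i : 𝕜) * ⟪x i, yb⟫_𝕜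
          - ∑ i, (p i : 𝕜) * ⟪c, y i⟫_𝕜 + ∑ i, (p i : 𝕜) * ⟪c, yb⟫_𝕜 := by
          rw [h1, h2, h3]; ring
      _ = ∑ i, (p i : 𝕜) * ⟪x i - c, y i - yb⟫_𝕜 := by
          simp only [inner_sub_left, inner_sub_right, mul_sub, Finset.sum_sub_distrib]
          ring
  rw [key]
  calc ‖∑ i, (p i : 𝕜) * ⟪x i - c, y i - yb⟫_𝕜‖
      ≤ ∑ i, ‖(p i : 𝕜) * ⟪x i - c, y i - yb⟫_𝕜‖ := norm_sum_le _ _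
    _ ≤ ∑ i, p i * (‖X - a‖ / 2 * ‖y i - yb‖) := by
        apply Finset.sum_le_sum
        intro i _
        rw [norm_mul, RCLike.norm_ofReal, abs_of_nonneg (hp i)]
        apply mul_le_mul_of_nonneg_left _ (hp i)
        calc ‖⟪x i - c, y i - yb⟫_𝕜‖ ≤ ‖x i - c‖ * ‖y i - yb‖ := norm_inner_le_norm _ _
          _ ≤ ‖X - a‖ / 2 * ‖y i - yb‖ := by
              apply mul_le_mul_of_nonneg_right (hx i) (norm_nonneg _)
    _ = (1 / 2) * ‖X - a‖ * ∑ i, p i * ‖y i - yb‖ := by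
        rw [Finset.mul_sum]; apply Finset.sum_congr rfl; intro i _; ring
end

section
/- Let H be an inner product space over ℝ or ℂ, x₁,…,xₙ, y₁,…,yₙ ∈ H, and p₁,…,pₙ ≥ 0 with Σᵢ pᵢ = 1. If x, X ∈ H satisfy Re⟨X - xᵢ, xᵢ - x⟩ ≥ 0 for all i, then |Σᵢ pᵢ⟨xᵢ, yᵢ⟩ - ⟨Σᵢ pᵢxᵢ, Σᵢ pᵢyᵢ⟩| ≤ (1/2)‖X - x‖ · (Σᵢ pᵢ‖yᵢ‖² - ‖Σᵢ pᵢyᵢ‖²)^{1/2}. -/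
open scoped InnerProductSpace

private lemma grussAux_var {𝕜 : Type*} [RCLike 𝕜] {H : Type*} [NormedAddCommGroup H]
    [InnerProductSpace 𝕜 H] {n : ℕ} (w : Fin n → H) (p : Fin n → ℝ)
    (hp1 : ∑ i, p i = 1) (c : H) :
    ∑ i, p i * ‖w i - c‖ ^ 2
      = ∑ i, p i * ‖w i‖ ^ 2
        - 2 * RCLike.re (⟪∑ i, (p i : 𝕜) • w i, c⟫_𝕜) + ‖c‖ ^ 2 := by
  have h1 : RCLike.re (⟪∑ i, (p i : 𝕜) • w i, c⟫_𝕜)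
      = ∑ i, p i * RCLike.re (⟪w i, c⟫_𝕜) := by
    rw [sum_inner, map_sum]
    refine Finset.sum_congr rfl fun i _ => ?_
    rw [inner_smul_left, RCLike.conj_ofReal, RCLike.re_ofReal_mul]
  rw [h1]
  have h2 : ∀ i ∈ Finset.univ, p i * ‖w i - c‖ ^ 2
      = p i * ‖w i‖ ^ 2 - 2 * (p i * RCLike.re ⟪w i, c⟫_𝕜) + p i * ‖c‖ ^ 2 := by
    intro i _
    rw [norm_sub_sq (𝕜 := 𝕜)]; ring
  rw [Finset.sum_congr rfl h2, Finset.sum_add_distrib, Finset.sum_sub_distrib,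
    ← Finset.mul_sum, ← Finset.sum_mul, hp1, one_mul]

theorem stmt7 {𝕜 : Type*} [RCLike 𝕜] {H : Type*} [NormedAddCommGroup H]
    [InnerProductSpace 𝕜 H] (n : ℕ) (x y : Fin n → H) (p : Fin n → ℝ)
    (hp : ∀ i, 0 ≤ p i) (hp1 : ∑ i, p i = 1) (a X : H)
    (hx : ∀ i, 0 ≤ RCLike.re (⟪X - x i, x i - a⟫_𝕜)) :
    ‖∑ i, (p i : 𝕜) * ⟪x i, y i⟫_𝕜 -
        ⟪∑ i, (p i : 𝕜) • x i, ∑ i, (p i : 𝕜) • y i⟫_𝕜‖ ≤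
      (1 / 2) * ‖X - a‖ *
        Real.sqrt (∑ i, p i * ‖y i‖ ^ 2 - ‖∑ i, (p i : 𝕜) • y i‖ ^ 2) := by
  classical
  set xb : H := ∑ i, (p i : 𝕜) • x i with hxb
  set yb : H := ∑ i, (p i : 𝕜) • y i with hyb
  have hq1 : (∑ i, (p i : 𝕜)) = (1 : 𝕜) := by
    rw [← RCLike.ofReal_sum, hp1, RCLike.ofReal_one]
  have hxin : ∀ z : H, ⟪xb, z⟫_𝕜 = ∑ i, (p i : 𝕜) * ⟪x i, z⟫_𝕜 := by
    intro z
    rw [hxb, sum_inner]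
    exact Finset.sum_congr rfl fun i _ => by rw [inner_smul_left, RCLike.conj_ofReal]
  have hyin : ∀ z : H, ⟪z, yb⟫_𝕜 = ∑ i, (p i : 𝕜) * ⟪z, y i⟫_𝕜 := by
    intro z
    rw [hyb, inner_sum]
    exact Finset.sum_congr rfl fun i _ => by rw [inner_smul_right]
  -- the key algebraic identity
  have key : ∑ i, (p i : 𝕜) * ⟪x i, y i⟫_𝕜 - ⟪xb, yb⟫_𝕜
      = ∑ i, (p i : 𝕜) * ⟪x i - xb, y i - yb⟫_𝕜 := by
    have expand : ∀ i ∈ Finset.univ, (p i : 𝕜) * ⟪x i - xb, y i - yb⟫_𝕜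
        = (p i : 𝕜) * ⟪x i, y i⟫_𝕜 - (p i : 𝕜) * ⟪x i, yb⟫_𝕜
          - ((p i : 𝕜) * ⟪xb, y i⟫_𝕜 - (p i : 𝕜) * ⟪xb, yb⟫_𝕜) := by
      intro i _
      rw [inner_sub_left, inner_sub_right, inner_sub_right]; ring
    rw [Finset.sum_congr rfl expand, Finset.sum_sub_distrib, Finset.sum_sub_distrib,
      Finset.sum_sub_distrib, ← hxin yb, ← hyin xb, ← Finset.sum_mul, hq1, one_mul]
    ring
  set Ax : ℝ := ∑ i, p i * ‖x i - xb‖ ^ 2 with hAx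
  set By : ℝ := ∑ i, p i * ‖y i - yb‖ ^ 2 with hBy
  have hAx0 : 0 ≤ Ax := Finset.sum_nonneg fun i _ => mul_nonneg (hp i) (by positivity)
  have hBy0 : 0 ≤ By := Finset.sum_nonneg fun i _ => mul_nonneg (hp i) (by positivity)
  -- norm bound
  have hnormb : ‖∑ i, (p i : 𝕜) * ⟪x i - xb, y i - yb⟫_𝕜‖
      ≤ ∑ i, p i * (‖x i - xb‖ * ‖y i - yb‖) := by
    refine (norm_sum_le _ _).trans (Finset.sum_le_sum fun i _ => ?_)
    rw [norm_mul, RCLike.norm_ofReal, abs_of_nonneg (hp i)]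
    exact mul_le_mul_of_nonneg_left (norm_inner_le_norm _ _) (hp i)
  -- Cauchy-Schwarz
  have hcs : ∑ i, p i * (‖x i - xb‖ * ‖y i - yb‖) ≤ Real.sqrt Ax * Real.sqrt By := by
    have h := Finset.sum_mul_sq_le_sq_mul_sq Finset.univ
      (fun i => Real.sqrt (p i) * ‖x i - xb‖) (fun i => Real.sqrt (p i) * ‖y i - yb‖)
    have e1 : ∀ i ∈ Finset.univ,
        (Real.sqrt (p i) * ‖x i - xb‖) * (Real.sqrt (p i) * ‖y i - yb‖)
          = p i * (‖x i - xb‖ * ‖y i - yb‖) := by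
      intro i _
      rw [show (Real.sqrt (p i) * ‖x i - xb‖) * (Real.sqrt (p i) * ‖y i - yb‖)
          = (Real.sqrt (p i) * Real.sqrt (p i)) * (‖x i - xb‖ * ‖y i - yb‖) by ring,
        Real.mul_self_sqrt (hp i)]
    have e2 : ∀ i ∈ Finset.univ, (Real.sqrt (p i) * ‖x i - xb‖) ^ 2 = p i * ‖x i - xb‖ ^ 2 := by
      intro i _; rw [mul_pow, Real.sq_sqrt (hp i)]
    have e3 : ∀ i ∈ Finset.univ, (Real.sqrt (p i) * ‖y i - yb‖) ^ 2 = p i * ‖y i - yb‖ ^ 2 := by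
      intro i _; rw [mul_pow, Real.sq_sqrt (hp i)]
    rw [Finset.sum_congr rfl e1, Finset.sum_congr rfl e2, Finset.sum_congr rfl e3] at h
    have hS0 : 0 ≤ ∑ i, p i * (‖x i - xb‖ * ‖y i - yb‖) :=
      Finset.sum_nonneg fun i _ => mul_nonneg (hp i) (by positivity)
    calc ∑ i, p i * (‖x i - xb‖ * ‖y i - yb‖)
        = Real.sqrt ((∑ i, p i * (‖x i - xb‖ * ‖y i - yb‖)) ^ 2) := (Real.sqrt_sq hS0).symm
      _ ≤ Real.sqrt (Ax * By) := Real.sqrt_le_sqrt h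
      _ = Real.sqrt Ax * Real.sqrt By := Real.sqrt_mul hAx0 _
  -- By identity
  have hById : By = ∑ i, p i * ‖y i‖ ^ 2 - ‖yb‖ ^ 2 := by
    rw [hBy, grussAux_var (𝕜 := 𝕜) y p hp1 yb, inner_self_eq_norm_sq]; ring
  -- bound on Ax
  set m : H := (2 : 𝕜)⁻¹ • (X + a) with hmdef
  have hmle : ∀ i, ‖x i - m‖ ^ 2 ≤ (1/4) * ‖X - a‖ ^ 2 := by
    intro i
    have h1 : x i - m = (2 : 𝕜)⁻¹ • ((x i - a) - (X - x i)) := by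
      rw [hmdef]; module
    have h2 : ‖x i - m‖ ^ 2 = (1/4) * ‖(x i - a) - (X - x i)‖ ^ 2 := by
      rw [h1, norm_smul, norm_inv, RCLike.norm_two]; ring
    have h3 : ‖X - a‖ ^ 2 = ‖(X - x i) + (x i - a)‖ ^ 2 := by
      congr 1; congr 1; abel
    have h4 := norm_add_sq (𝕜 := 𝕜) (X - x i) (x i - a)
    have h5 := norm_sub_sq (𝕜 := 𝕜) (x i - a) (X - x i)
    rw [inner_re_symm] at h5
    have h6 := hx i
    linarith [h2, h3, h4, h5, h6]
  have hAxle : Ax ≤ (1/4) * ‖X - a‖ ^ 2 := by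
    have hv1 : Ax = ∑ i, p i * ‖x i‖ ^ 2 - ‖xb‖ ^ 2 := by
      rw [hAx, grussAux_var (𝕜 := 𝕜) x p hp1 xb, inner_self_eq_norm_sq]; ring
    have hv2 : ∑ i, p i * ‖x i - m‖ ^ 2
        = ∑ i, p i * ‖x i‖ ^ 2 - 2 * RCLike.re (⟪xb, m⟫_𝕜) + ‖m‖ ^ 2 :=
      grussAux_var (𝕜 := 𝕜) x p hp1 m
    have hv3 := norm_sub_sq (𝕜 := 𝕜) xb m
    have hv4 : (0:ℝ) ≤ ‖xb - m‖ ^ 2 := by positivity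
    have hv5 : ∑ i, p i * ‖x i - m‖ ^ 2 ≤ (1/4) * ‖X - a‖ ^ 2 := by
      calc ∑ i, p i * ‖x i - m‖ ^ 2
          ≤ ∑ i, p i * ((1/4) * ‖X - a‖ ^ 2) :=
            Finset.sum_le_sum fun i _ => mul_le_mul_of_nonneg_left (hmle i) (hp i)
        _ = (1/4) * ‖X - a‖ ^ 2 := by rw [← Finset.sum_mul, hp1, one_mul]
    linarith
  have hsqrtA : Real.sqrt Ax ≤ (1/2) * ‖X - a‖ := by
    have he : Real.sqrt ((1/4) * ‖X - a‖ ^ 2) = (1/2) * ‖X - a‖ := by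
      rw [show (1/4) * ‖X - a‖ ^ 2 = ((1/2) * ‖X - a‖) ^ 2 by ring,
        Real.sqrt_sq (by positivity)]
    rw [← he]
    exact Real.sqrt_le_sqrt hAxle
  calc ‖∑ i, (p i : 𝕜) * ⟪x i, y i⟫_𝕜 - ⟪xb, yb⟫_𝕜‖
      = ‖∑ i, (p i : 𝕜) * ⟪x i - xb, y i - yb⟫_𝕜‖ := by rw [key]
    _ ≤ ∑ i, p i * (‖x i - xb‖ * ‖y i - yb‖) := hnormb
    _ ≤ Real.sqrt Ax * Real.sqrt By := hcs
    _ ≤ ((1/2) * ‖X - a‖) * Real.sqrt By :=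
        mul_le_mul_of_nonneg_right hsqrtA (Real.sqrt_nonneg _)
    _ = (1 / 2) * ‖X - a‖ * Real.sqrt (∑ i, p i * ‖y i‖ ^ 2 - ‖yb‖ ^ 2) := by
        rw [← hById]
end

section
/- The constant 1/2 in the Grüss-type inequality |Σᵢ pᵢ⟨xᵢ,yᵢ⟩ - ⟨Σᵢ pᵢxᵢ, Σᵢ pᵢyᵢ⟩| ≤ C‖X - x‖ Σᵢ pᵢ‖yᵢ - Σⱼ pⱼyⱼ‖ is best possible: if C > 0 is such that the inequality holds for all inner product spaces H, all n, all probability sequences (pᵢ), and all xᵢ, yᵢ, x, X ∈ H with ‖xᵢ - (x+X)/2‖ ≤ (1/2)‖X - x‖ for all i and x ≠ X, then C ≥ 1/2. -/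
open scoped InnerProductSpace

theorem stmt8 (C : ℝ) (hC : 0 < C)
    (h : ∀ (𝕜 : Type) (_ : RCLike 𝕜) (H : Type) (_ : NormedAddCommGroup H)
      (_ : InnerProductSpace 𝕜 H) (n : ℕ) (x y : Fin n → H) (p : Fin n → ℝ),
      (∀ i, 0 ≤ p i) → ∑ i, p i = 1 →
      ∀ a X : H, a ≠ X →
      (∀ i, ‖x i - (2 : 𝕜)⁻¹ • (a + X)‖ ≤ ‖X - a‖ / 2) →
      ‖∑ i, (p i : 𝕜) * ⟪x i, y i⟫_𝕜 -
          ⟪∑ i, (p i : 𝕜) • x i, ∑ i, (p i : 𝕜) • y i⟫_𝕜‖ ≤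
        C * ‖X - a‖ * ∑ i, p i * ‖y i - ∑ j, (p j : 𝕜) • y j‖) :
    1 / 2 ≤ C := by
  have := h ℝ inferInstance ℝ inferInstance inferInstance 2 ![0, 1] ![0, 1] ![1/2, 1/2]
    (by intro i; fin_cases i <;> norm_num)
    (by simp [Fin.sum_univ_two]; norm_num)
    0 1 (by norm_num)
    (by intro i; fin_cases i <;> simp <;> norm_num [abs_le])
  simp only [Fin.sum_univ_two, RCLike.inner_apply, starRingEnd_apply] at this
  norm_num at this
  simp [abs_of_nonneg] at this
  linarith
end

section
/- Let H be an inner product space, x₁,…,xₙ ∈ H, p₁,…,pₙ ≥ 0 with Σᵢ pᵢ = 1, and suppose x, X ∈ H satisfy ‖xᵢ - (x+X)/2‖ ≤ (1/2)‖X - x‖ for all i. Then 0 ≤ Σᵢ pᵢ‖xᵢ‖² - ‖Σᵢ pᵢxᵢ‖² ≤ (1/2)‖X - x‖ · Σᵢ pᵢ‖xᵢ - Σⱼ pⱼxⱼ‖. -/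
/-!
Write `m = ∑ pᵢ xᵢ` and `c = (a + X) / 2`. Since `∑ pᵢ (xᵢ - m) = 0`, the weighted sum
`∑ pᵢ re ⟪xᵢ - m, xᵢ - v⟫` does not depend on `v`: for `v = m` it is the variance
`∑ pᵢ ‖xᵢ - m‖² = ∑ pᵢ ‖xᵢ‖² - ‖m‖²`, and for `v = c` Cauchy–Schwarz bounds it by
`∑ pᵢ ‖xᵢ - m‖ ‖xᵢ - c‖ ≤ ½ ‖X - a‖ ∑ pᵢ ‖xᵢ - m‖`.
-/

open RCLike Finset
open scoped InnerProductSpace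

section WeightedMean

variable {𝕜 E ι : Type*} [RCLike 𝕜] [NormedAddCommGroup E] [InnerProductSpace 𝕜 E]
  (s : Finset ι) {p : ι → ℝ} (x : ι → E)

theorem sum_ofReal_smul_sub_weightedMean (hp : ∑ i ∈ s, p i = 1) :
    ∑ i ∈ s, (p i : 𝕜) • (x i - ∑ j ∈ s, (p j : 𝕜) • x j) = 0 := by
  have hp' : ∑ i ∈ s, (p i : 𝕜) = 1 := by rw [← ofReal_sum, hp, ofReal_one]
  simp only [smul_sub, sum_sub_distrib, ← sum_smul, hp', one_smul, sub_self]

theorem sum_mul_re_inner_eq_re_inner_sum_ofReal_smul (v : E) (y : ι → E) :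
    ∑ i ∈ s, p i * re ⟪y i, v⟫_𝕜 = re ⟪∑ i ∈ s, (p i : 𝕜) • y i, v⟫_𝕜 := by
  simp only [sum_inner, map_sum, inner_smul_left, conj_ofReal, re_ofReal_mul]

theorem sum_mul_re_inner_sub_weightedMean_eq_zero (hp : ∑ i ∈ s, p i = 1) (v : E) :
    ∑ i ∈ s, p i * re ⟪x i - ∑ j ∈ s, (p j : 𝕜) • x j, v⟫_𝕜 = 0 := by
  rw [sum_mul_re_inner_eq_re_inner_sum_ofReal_smul, sum_ofReal_smul_sub_weightedMean s x hp,
    inner_zero_left, map_zero]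

theorem sum_mul_re_inner_sub_weightedMean_sub (hp : ∑ i ∈ s, p i = 1) (v : E) :
    ∑ i ∈ s, p i * re ⟪x i - ∑ j ∈ s, (p j : 𝕜) • x j, x i - v⟫_𝕜 =
      ∑ i ∈ s, p i * ‖x i - ∑ j ∈ s, (p j : 𝕜) • x j‖ ^ 2 := by
  set m := ∑ j ∈ s, (p j : 𝕜) • x j
  have hsplit : ∀ i, re ⟪x i - m, x i - v⟫_𝕜 = ‖x i - m‖ ^ 2 + re ⟪x i - m, m - v⟫_𝕜 := by
    intro i
    rw [← inner_self_eq_norm_sq (𝕜 := 𝕜), ← map_add, ← inner_add_right, sub_add_sub_cancel]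
  have hcross : ∑ i ∈ s, p i * re ⟪x i - m, m - v⟫_𝕜 = 0 :=
    sum_mul_re_inner_sub_weightedMean_eq_zero s x hp _
  simp only [hsplit, mul_add, sum_add_distrib, hcross, add_zero]

theorem sum_mul_norm_sq_sub_norm_sq_weightedMean (hp : ∑ i ∈ s, p i = 1) :
    ∑ i ∈ s, p i * ‖x i‖ ^ 2 - ‖∑ i ∈ s, (p i : 𝕜) • x i‖ ^ 2 =
      ∑ i ∈ s, p i * ‖x i - ∑ j ∈ s, (p j : 𝕜) • x j‖ ^ 2 := by
  set m := ∑ j ∈ s, (p j : 𝕜) • x j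
  have hmean : ∑ i ∈ s, p i * re ⟪x i, m⟫_𝕜 = ‖m‖ ^ 2 := by
    rw [sum_mul_re_inner_eq_re_inner_sum_ofReal_smul, inner_self_eq_norm_sq]
  have hsplit : ∀ i, ‖x i‖ ^ 2 = re ⟪x i - m, x i⟫_𝕜 + re ⟪x i, m⟫_𝕜 := by
    intro i
    rw [inner_sub_left, map_sub, ← inner_conj_symm m, conj_re, sub_add_cancel,
      inner_self_eq_norm_sq]
  simpa only [hsplit, mul_add, sum_add_distrib, hmean, add_sub_cancel_right, sub_zero] using
    sum_mul_re_inner_sub_weightedMean_sub s x hp (0 : E)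

theorem sum_mul_norm_sq_sub_norm_sq_weightedMean_le (hp₀ : ∀ i ∈ s, 0 ≤ p i)
    (hp : ∑ i ∈ s, p i = 1) {c : E} {r : ℝ} (hx : ∀ i ∈ s, ‖x i - c‖ ≤ r) :
    ∑ i ∈ s, p i * ‖x i‖ ^ 2 - ‖∑ i ∈ s, (p i : 𝕜) • x i‖ ^ 2 ≤
      r * ∑ i ∈ s, p i * ‖x i - ∑ j ∈ s, (p j : 𝕜) • x j‖ := by
  rw [sum_mul_norm_sq_sub_norm_sq_weightedMean s x hp,
    ← sum_mul_re_inner_sub_weightedMean_sub s x hp c, mul_sum]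
  refine sum_le_sum fun i hi => ?_
  calc p i * re ⟪x i - ∑ j ∈ s, (p j : 𝕜) • x j, x i - c⟫_𝕜
      ≤ p i * (‖x i - ∑ j ∈ s, (p j : 𝕜) • x j‖ * r) := by
        gcongr
        · exact hp₀ i hi
        · exact (re_inner_le_norm _ _).trans (by gcongr; exact hx i hi)
    _ = r * (p i * ‖x i - ∑ j ∈ s, (p j : 𝕜) • x j‖) := by ring

end WeightedMean

theorem stmt9 {𝕜 : Type*} [RCLike 𝕜] {H : Type*} [NormedAddCommGroup H]
    [InnerProductSpace 𝕜 H] (n : ℕ) (x : Fin n → H) (p : Fin n → ℝ)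
    (hp : ∀ i, 0 ≤ p i) (hp1 : ∑ i, p i = 1) (a X : H)
    (hx : ∀ i, ‖x i - (2 : 𝕜)⁻¹ • (a + X)‖ ≤ ‖X - a‖ / 2) :
    0 ≤ ∑ i, p i * ‖x i‖ ^ 2 - ‖∑ i, (p i : 𝕜) • x i‖ ^ 2 ∧
      ∑ i, p i * ‖x i‖ ^ 2 - ‖∑ i, (p i : 𝕜) • x i‖ ^ 2 ≤
        (1 / 2) * ‖X - a‖ * ∑ i, p i * ‖x i - ∑ j, (p j : 𝕜) • x j‖ := by
  constructor
  · rw [sum_mul_norm_sq_sub_norm_sq_weightedMean _ x hp1]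
    exact sum_nonneg fun i _ => mul_nonneg (hp i) (sq_nonneg _)
  · rw [one_div_mul_eq_div]
    exact sum_mul_norm_sq_sub_norm_sq_weightedMean_le _ x (fun i _ => hp i) hp1
      (fun i _ => hx i)
end

section
/- Let H be an inner product space, x₁,…,xₙ, y₁,…,yₙ ∈ H, (pᵢ) a probability sequence, and x, X, y, Y ∈ H with ‖xᵢ - (x+X)/2‖ ≤ (1/2)‖X - x‖ and ‖yᵢ - (y+Y)/2‖ ≤ (1/2)‖Y - y‖ for all i. Then |Σᵢ pᵢ⟨xᵢ,yᵢ⟩ - ⟨Σᵢ pᵢxᵢ, Σᵢ pᵢyᵢ⟩| ≤ (1/2)‖X-x‖ Σᵢ pᵢ‖yᵢ - Σⱼ pⱼyⱼ‖ ≤ (1/2)‖X-x‖ (Σᵢ pᵢ‖yᵢ‖² - ‖Σᵢ pᵢyᵢ‖²)^{1/2} ≤ (1/4)‖X-x‖ ‖Y-y‖. -/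
open scoped InnerProductSpace

theorem stmt10 {𝕜 : Type*} [RCLike 𝕜] {H : Type*} [NormedAddCommGroup H]
    [InnerProductSpace 𝕜 H] (n : ℕ) (x y : Fin n → H) (p : Fin n → ℝ)
    (hp : ∀ i, 0 ≤ p i) (hp1 : ∑ i, p i = 1) (a X b Y : H)
    (hx : ∀ i, ‖x i - (2 : 𝕜)⁻¹ • (a + X)‖ ≤ ‖X - a‖ / 2)
    (hy : ∀ i, ‖y i - (2 : 𝕜)⁻¹ • (b + Y)‖ ≤ ‖Y - b‖ / 2) :
    ‖∑ i, (p i : 𝕜) * ⟪x i, y i⟫_𝕜 -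
        ⟪∑ i, (p i : 𝕜) • x i, ∑ i, (p i : 𝕜) • y i⟫_𝕜‖ ≤
      (1 / 2) * ‖X - a‖ * ∑ i, p i * ‖y i - ∑ j, (p j : 𝕜) • y j‖ ∧
    (1 / 2) * ‖X - a‖ * ∑ i, p i * ‖y i - ∑ j, (p j : 𝕜) • y j‖ ≤
      (1 / 2) * ‖X - a‖ *
        Real.sqrt (∑ i, p i * ‖y i‖ ^ 2 - ‖∑ i, (p i : 𝕜) • y i‖ ^ 2) ∧
    (1 / 2) * ‖X - a‖ *
        Real.sqrt (∑ i, p i * ‖y i‖ ^ 2 - ‖∑ i, (p i : 𝕜) • y i‖ ^ 2) ≤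
      (1 / 4) * ‖X - a‖ * ‖Y - b‖ := by
  set c : H := (2 : 𝕜)⁻¹ • (a + X) with hc
  set d : H := (2 : 𝕜)⁻¹ • (b + Y) with hd
  set yb : H := ∑ j, (p j : 𝕜) • y j with hyb
  have hp1' : (∑ i, (p i : 𝕜)) = 1 := by
    rw [← RCLike.ofReal_sum, hp1, RCLike.ofReal_one]
  -- generic expansion of ∑ pᵢ ‖yᵢ - z‖²
  have expand : ∀ z : H, ∑ i, p i * ‖y i - z‖ ^ 2 =
      ∑ i, p i * ‖y i‖ ^ 2 - 2 * RCLike.re (⟪yb, z⟫_𝕜) + ‖z‖ ^ 2 := by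
    intro z
    have hre : ∑ i, p i * RCLike.re (⟪y i, z⟫_𝕜) = RCLike.re (⟪yb, z⟫_𝕜) := by
      rw [hyb, sum_inner, map_sum]
      refine Finset.sum_congr rfl fun i _ => ?_
      rw [inner_smul_left, RCLike.conj_ofReal, RCLike.re_ofReal_mul]
    calc ∑ i, p i * ‖y i - z‖ ^ 2
        = ∑ i, (p i * ‖y i‖ ^ 2 - 2 * (p i * RCLike.re (⟪y i, z⟫_𝕜)) + p i * ‖z‖ ^ 2) := by
          refine Finset.sum_congr rfl fun i _ => ?_
          rw [norm_sub_sq (𝕜 := 𝕜)]; ring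
      _ = ∑ i, p i * ‖y i‖ ^ 2 - 2 * ∑ i, p i * RCLike.re (⟪y i, z⟫_𝕜)
            + (∑ i, p i) * ‖z‖ ^ 2 := by
          rw [Finset.sum_add_distrib, Finset.sum_sub_distrib, ← Finset.mul_sum,
            ← Finset.sum_mul]
      _ = _ := by rw [hre, hp1, one_mul]
  have hvar : ∑ i, p i * ‖y i - yb‖ ^ 2 = ∑ i, p i * ‖y i‖ ^ 2 - ‖yb‖ ^ 2 := by
    rw [expand yb, inner_self_eq_norm_sq]; ring
  have hS0 : 0 ≤ ∑ i, p i * ‖y i‖ ^ 2 - ‖yb‖ ^ 2 := by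
    rw [← hvar]
    exact Finset.sum_nonneg fun i _ => mul_nonneg (hp i) (sq_nonneg _)
  have hXa : (0:ℝ) ≤ ‖X - a‖ / 2 := by positivity
  constructor
  · -- first inequality
    have key : (∑ i, (p i : 𝕜) * ⟪x i, y i⟫_𝕜) - ⟪∑ i, (p i : 𝕜) • x i, yb⟫_𝕜
        = ∑ i, (p i : 𝕜) * ⟪x i - c, y i - yb⟫_𝕜 := by
      have h1 : ⟪∑ i, (p i : 𝕜) • x i, yb⟫_𝕜 = ∑ i, (p i : 𝕜) * ⟪x i, yb⟫_𝕜 := by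
        rw [sum_inner]
        exact Finset.sum_congr rfl fun i _ => by
          rw [inner_smul_left, RCLike.conj_ofReal]
      have h2 : ∑ i, (p i : 𝕜) * ⟪c, y i⟫_𝕜 = ⟪c, yb⟫_𝕜 := by
        rw [hyb, inner_sum]
        exact Finset.sum_congr rfl fun i _ => by rw [inner_smul_right]
      have h3 : ∑ i, (p i : 𝕜) * ⟪c, yb⟫_𝕜 = ⟪c, yb⟫_𝕜 := by
        rw [← Finset.sum_mul, hp1', one_mul]
      calc (∑ i, (p i : 𝕜) * ⟪x i, y i⟫_𝕜) - ⟪∑ i, (p i : 𝕜) • x i, yb⟫_𝕜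
          = (∑ i, (p i : 𝕜) * ⟪x i, y i⟫_𝕜) - (∑ i, (p i : 𝕜) * ⟪x i, yb⟫_𝕜)
            - (∑ i, (p i : 𝕜) * ⟪c, y i⟫_𝕜) + ∑ i, (p i : 𝕜) * ⟪c, yb⟫_𝕜 := by
            rw [h1, h2, h3]; ring
        _ = ∑ i, (p i : 𝕜) * ⟪x i - c, y i - yb⟫_𝕜 := by
            rw [← Finset.sum_sub_distrib, ← Finset.sum_sub_distrib,
              ← Finset.sum_add_distrib]
            refine Finset.sum_congr rfl fun i _ => ?_
            rw [inner_sub_left, inner_sub_right, inner_sub_right]; ring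
    rw [key]
    calc ‖∑ i, (p i : 𝕜) * ⟪x i - c, y i - yb⟫_𝕜‖
        ≤ ∑ i, ‖(p i : 𝕜) * ⟪x i - c, y i - yb⟫_𝕜‖ := norm_sum_le _ _
      _ ≤ ∑ i, p i * (‖X - a‖ / 2 * ‖y i - yb‖) := by
          refine Finset.sum_le_sum fun i _ => ?_
          rw [norm_mul, RCLike.norm_ofReal, abs_of_nonneg (hp i)]
          refine mul_le_mul_of_nonneg_left ?_ (hp i)
          calc ‖⟪x i - c, y i - yb⟫_𝕜‖ ≤ ‖x i - c‖ * ‖y i - yb‖ := norm_inner_le_norm _ _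
            _ ≤ ‖X - a‖ / 2 * ‖y i - yb‖ :=
                mul_le_mul_of_nonneg_right (hx i) (norm_nonneg _)
      _ = (1 / 2) * ‖X - a‖ * ∑ i, p i * ‖y i - yb‖ := by
          rw [Finset.mul_sum]; exact Finset.sum_congr rfl fun i _ => by ring
  constructor
  · -- second inequality
    refine mul_le_mul_of_nonneg_left ?_ (by positivity)
    have hA : (0:ℝ) ≤ ∑ i, p i * ‖y i - yb‖ :=
      Finset.sum_nonneg fun i _ => mul_nonneg (hp i) (norm_nonneg _)
    rw [Real.le_sqrt hA hS0, ← hvar]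
    calc (∑ i, p i * ‖y i - yb‖) ^ 2
        = (∑ i, Real.sqrt (p i) * (Real.sqrt (p i) * ‖y i - yb‖)) ^ 2 := by
          congr 1
          refine Finset.sum_congr rfl fun i _ => ?_
          rw [← mul_assoc, Real.mul_self_sqrt (hp i)]
      _ ≤ (∑ i, Real.sqrt (p i) ^ 2) * ∑ i, (Real.sqrt (p i) * ‖y i - yb‖) ^ 2 :=
          Finset.sum_mul_sq_le_sq_mul_sq _ _ _
      _ = ∑ i, p i * ‖y i - yb‖ ^ 2 := by
          have : ∑ i, Real.sqrt (p i) ^ 2 = 1 := by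
            rw [← hp1]; exact Finset.sum_congr rfl fun i _ => Real.sq_sqrt (hp i)
          rw [this, one_mul]
          exact Finset.sum_congr rfl fun i _ => by
            rw [mul_pow, Real.sq_sqrt (hp i)]
  · -- third inequality
    have hmin : ∑ i, p i * ‖y i‖ ^ 2 - ‖yb‖ ^ 2 ≤ ∑ i, p i * ‖y i - d‖ ^ 2 := by
      rw [expand d]
      have : (0:ℝ) ≤ ‖yb - d‖ ^ 2 := sq_nonneg _
      rw [norm_sub_sq (𝕜 := 𝕜)] at this
      linarith
    have hbound : ∑ i, p i * ‖y i - d‖ ^ 2 ≤ (‖Y - b‖ / 2) ^ 2 := by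
      calc ∑ i, p i * ‖y i - d‖ ^ 2 ≤ ∑ i, p i * (‖Y - b‖ / 2) ^ 2 :=
            Finset.sum_le_sum fun i _ => mul_le_mul_of_nonneg_left
              (pow_le_pow_left₀ (norm_nonneg _) (hy i) 2) (hp i)
        _ = (‖Y - b‖ / 2) ^ 2 := by rw [← Finset.sum_mul, hp1, one_mul]
    have hsqrt : Real.sqrt (∑ i, p i * ‖y i‖ ^ 2 - ‖yb‖ ^ 2) ≤ ‖Y - b‖ / 2 := by
      calc Real.sqrt (∑ i, p i * ‖y i‖ ^ 2 - ‖yb‖ ^ 2)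
          ≤ Real.sqrt ((‖Y - b‖ / 2) ^ 2) := Real.sqrt_le_sqrt (le_trans hmin hbound)
        _ = ‖Y - b‖ / 2 := Real.sqrt_sq (by positivity)
    calc (1 / 2) * ‖X - a‖ * Real.sqrt (∑ i, p i * ‖y i‖ ^ 2 - ‖yb‖ ^ 2)
        ≤ (1 / 2) * ‖X - a‖ * (‖Y - b‖ / 2) :=
          mul_le_mul_of_nonneg_left hsqrt (by positivity)
      _ = (1 / 4) * ‖X - a‖ * ‖Y - b‖ := by ring
end

section
/- Let H be an inner product space over 𝕂 (ℝ or ℂ), x₁,…,xₙ ∈ H, α₁,…,αₙ ∈ 𝕂, (pᵢ) a probability sequence, and x, X ∈ H with ‖xᵢ - (x+X)/2‖ ≤ (1/2)‖X - x‖ for all i. Then ‖Σᵢ pᵢαᵢxᵢ - (Σᵢ pᵢαᵢ)(Σᵢ pᵢxᵢ)‖ ≤ (1/2)‖X - x‖ · Σᵢ pᵢ|αᵢ - Σⱼ pⱼαⱼ|. -/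
theorem stmt12 {𝕜 : Type*} [RCLike 𝕜] {H : Type*} [NormedAddCommGroup H]
    [InnerProductSpace 𝕜 H] (n : ℕ) (x : Fin n → H) (α : Fin n → 𝕜)
    (p : Fin n → ℝ) (hp : ∀ i, 0 ≤ p i) (hp1 : ∑ i, p i = 1) (a X : H)
    (hx : ∀ i, ‖x i - (2 : 𝕜)⁻¹ • (a + X)‖ ≤ ‖X - a‖ / 2) :
    ‖∑ i, (p i : 𝕜) • α i • x i -
        (∑ i, (p i : 𝕜) * α i) • ∑ i, (p i : 𝕜) • x i‖ ≤
      (1 / 2) * ‖X - a‖ * ∑ i, p i * ‖α i - ∑ j, (p j : 𝕜) * α j‖ := by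
  set ᾱ : 𝕜 := ∑ j, (p j : 𝕜) * α j with hᾱ
  set c : H := (2 : 𝕜)⁻¹ • (a + X) with hc
  have hs : (∑ i, (p i : 𝕜)) = 1 := by
    rw [← RCLike.ofReal_sum, hp1, RCLike.ofReal_one]
  have key : ∑ i, (p i : 𝕜) • α i • x i - (∑ i, (p i : 𝕜) * α i) • ∑ i, (p i : 𝕜) • x i
      = ∑ i, (p i : 𝕜) • (α i - ᾱ) • (x i - c) := by
    have expand : ∀ i : Fin n, (p i : 𝕜) • (α i - ᾱ) • (x i - c)
        = (p i : 𝕜) • α i • x i - ᾱ • (p i : 𝕜) • x i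
          - ((p i : 𝕜) * α i) • c + ((p i : 𝕜) * ᾱ) • c := by
      intro i
      module
    rw [Finset.sum_congr rfl (fun i _ => expand i)]
    simp only [Finset.sum_add_distrib, Finset.sum_sub_distrib, ← Finset.smul_sum,
      ← Finset.sum_smul, ← hᾱ, ← Finset.sum_mul, hs, one_mul]
    abel
  rw [key]
  have h1 : ∀ i : Fin n, ‖(p i : 𝕜) • (α i - ᾱ) • (x i - c)‖
      ≤ p i * ‖α i - ᾱ‖ * (‖X - a‖ / 2) := by
    intro i
    rw [norm_smul, norm_smul, RCLike.norm_ofReal, abs_of_nonneg (hp i)]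
    have h0 : 0 ≤ p i * ‖α i - ᾱ‖ := mul_nonneg (hp i) (norm_nonneg _)
    calc p i * (‖α i - ᾱ‖ * ‖x i - c‖) = p i * ‖α i - ᾱ‖ * ‖x i - c‖ := by ring
      _ ≤ p i * ‖α i - ᾱ‖ * (‖X - a‖ / 2) := mul_le_mul_of_nonneg_left (hx i) h0
  calc ‖∑ i, (p i : 𝕜) • (α i - ᾱ) • (x i - c)‖
      ≤ ∑ i, ‖(p i : 𝕜) • (α i - ᾱ) • (x i - c)‖ := norm_sum_le _ _
    _ ≤ ∑ i, p i * ‖α i - ᾱ‖ * (‖X - a‖ / 2) := Finset.sum_le_sum fun i _ => h1 i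
    _ = (1 / 2) * ‖X - a‖ * ∑ i, p i * ‖α i - ᾱ‖ := by
        rw [← Finset.sum_mul]; ring
end

section
/- Let H be an inner product space over 𝕂 (ℝ or ℂ), x₁,…,xₙ ∈ H, α₁,…,αₙ ∈ 𝕂, (pᵢ) a probability sequence, and x, X ∈ H with Re⟨X - xᵢ, xᵢ - x⟩ ≥ 0 for all i. Then ‖Σᵢ pᵢαᵢxᵢ - (Σᵢ pᵢαᵢ)(Σᵢ pᵢxᵢ)‖ ≤ (1/2)‖X - x‖ (Σᵢ pᵢ|αᵢ|² - |Σᵢ pᵢαᵢ|²)^{1/2}. -/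
open scoped InnerProductSpace
open Finset

lemma var_aux {𝕜 : Type*} [RCLike 𝕜] {E : Type*} [NormedAddCommGroup E]
    [InnerProductSpace 𝕜 E] (n : ℕ) (p : Fin n → ℝ) (hp1 : ∑ i, p i = 1)
    (y : Fin n → E) :
    ∑ i, p i * ‖y i - ∑ j, (p j : 𝕜) • y j‖ ^ 2
      = ∑ i, p i * ‖y i‖ ^ 2 - ‖∑ j, (p j : 𝕜) • y j‖ ^ 2 := by
  set ybar : E := ∑ j, (p j : 𝕜) • y j with hybar
  have key : ∑ i, p i * RCLike.re (⟪y i, ybar⟫_𝕜) = ‖ybar‖ ^ 2 := by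
    have : ∑ i, p i * RCLike.re (⟪y i, ybar⟫_𝕜)
        = RCLike.re (⟪ybar, ybar⟫_𝕜) := by
      rw [hybar, sum_inner, map_sum]
      congr 1
      ext i
      rw [inner_smul_left]
      simp [RCLike.conj_ofReal]
    rw [this, ← @inner_self_eq_norm_sq 𝕜]
  calc ∑ i, p i * ‖y i - ybar‖ ^ 2
      = ∑ i, (p i * ‖y i‖ ^ 2 - 2 * (p i * RCLike.re (⟪y i, ybar⟫_𝕜))
          + p i * ‖ybar‖ ^ 2) := by
        congr 1; ext i
        rw [@norm_sub_sq 𝕜]; ring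
    _ = ∑ i, p i * ‖y i‖ ^ 2 - 2 * ∑ i, p i * RCLike.re (⟪y i, ybar⟫_𝕜)
          + (∑ i, p i) * ‖ybar‖ ^ 2 := by
        rw [sum_add_distrib, sum_sub_distrib, ← mul_sum, ← sum_mul]
    _ = _ := by rw [key, hp1]; ring

theorem stmt14 {𝕜 : Type*} [RCLike 𝕜] {H : Type*} [NormedAddCommGroup H]
    [InnerProductSpace 𝕜 H] (n : ℕ) (x : Fin n → H) (α : Fin n → 𝕜)
    (p : Fin n → ℝ) (hp : ∀ i, 0 ≤ p i) (hp1 : ∑ i, p i = 1) (a X : H)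
    (hx : ∀ i, 0 ≤ RCLike.re (⟪X - x i, x i - a⟫_𝕜)) :
    ‖∑ i, (p i : 𝕜) • α i • x i -
        (∑ i, (p i : 𝕜) * α i) • ∑ i, (p i : 𝕜) • x i‖ ≤
      (1 / 2) * ‖X - a‖ *
        Real.sqrt (∑ i, p i * ‖α i‖ ^ 2 - ‖∑ i, (p i : 𝕜) * α i‖ ^ 2) := by
  set abar : 𝕜 := ∑ i, (p i : 𝕜) * α i with habar
  set xbar : H := ∑ i, (p i : 𝕜) • x i with hxbar
  -- Step 1: rewrite difference
  have hS : ∑ i, (p i : 𝕜) • α i • x i - abar • xbar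
      = ∑ i, (p i : 𝕜) • ((α i - abar) • (x i - xbar)) := by
    have h1 : ∑ i, (p i : 𝕜) • ((α i - abar) • (x i - xbar))
        = ∑ i, ((p i : 𝕜) • α i • x i - (p i : 𝕜) • abar • x i
            - (p i : 𝕜) • α i • xbar + (p i : 𝕜) • abar • xbar) := by
      congr 1; ext i
      module
    rw [h1]
    simp only [sum_add_distrib, sum_sub_distrib]
    have h2 : ∑ i, (p i : 𝕜) • abar • x i = abar • xbar := by
      rw [hxbar, smul_sum]
      congr 1; ext i; rw [smul_comm]
    have h3 : ∑ i, (p i : 𝕜) • α i • xbar = abar • xbar := by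
      rw [habar, sum_smul]
      congr 1; ext i; rw [smul_smul]
    have h4 : ∑ i, (p i : 𝕜) • abar • xbar = abar • xbar := by
      rw [← sum_smul]
      norm_cast
      rw [hp1]; simp
    rw [h2, h3, h4]
    abel
  rw [hS]
  -- Step 2: triangle + Cauchy-Schwarz
  have step2 : ‖∑ i, (p i : 𝕜) • ((α i - abar) • (x i - xbar))‖
      ≤ ∑ i, p i * (‖α i - abar‖ * ‖x i - xbar‖) := by
    refine (norm_sum_le _ _).trans (le_of_eq ?_)
    congr 1; ext i
    rw [norm_smul, norm_smul]
    simp [abs_of_nonneg (hp i)]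
  have cs : ∑ i, p i * (‖α i - abar‖ * ‖x i - xbar‖)
      ≤ Real.sqrt (∑ i, p i * ‖α i - abar‖ ^ 2)
        * Real.sqrt (∑ i, p i * ‖x i - xbar‖ ^ 2) := by
    have := Real.sum_sqrt_mul_sqrt_le (univ : Finset (Fin n))
      (f := fun i => p i * ‖α i - abar‖ ^ 2) (g := fun i => p i * ‖x i - xbar‖ ^ 2)
      (fun i => mul_nonneg (hp i) (sq_nonneg _)) (fun i => mul_nonneg (hp i) (sq_nonneg _))
    refine le_trans (le_of_eq ?_) this
    congr 1; ext i
    rw [Real.sqrt_mul (hp i), Real.sqrt_mul (hp i), Real.sqrt_sq (norm_nonneg _),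
      Real.sqrt_sq (norm_nonneg _)]
    linear_combination (-(‖α i - abar‖ * ‖x i - xbar‖)) * Real.sq_sqrt (hp i)
  -- Step 3: α-variance
  have hA : ∑ i, p i * ‖α i - abar‖ ^ 2 = ∑ i, p i * ‖α i‖ ^ 2 - ‖abar‖ ^ 2 := by
    have := var_aux (𝕜 := 𝕜) (E := 𝕜) n p hp1 α
    simpa [smul_eq_mul, habar] using this
  -- Step 4: x-variance bound
  have hB : ∑ i, p i * ‖x i - xbar‖ ^ 2 ≤ (‖X - a‖ / 2) ^ 2 := by
    set c : H := (2⁻¹ : 𝕜) • (X + a) with hc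
    have hshift : ∑ i, p i * ‖x i - xbar‖ ^ 2
        = ∑ i, p i * ‖(x i - c) - ∑ j, (p j : 𝕜) • (x j - c)‖ ^ 2 := by
      congr 1; ext i
      congr 3
      have : ∑ j, (p j : 𝕜) • (x j - c) = xbar - c := by
        simp only [smul_sub, sum_sub_distrib]
        rw [← hxbar]
        congr 1
        rw [← sum_smul]
        norm_cast
        rw [hp1]; simp
      rw [this]; abel
    have hvar := var_aux (𝕜 := 𝕜) (E := H) n p hp1 (fun i => x i - c)
    have hbound : ∀ i, ‖x i - c‖ ^ 2 ≤ (‖X - a‖ / 2) ^ 2 := by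
      intro i
      have hid : (‖X - a‖ / 2) ^ 2 - ‖x i - c‖ ^ 2
          = RCLike.re (⟪X - x i, x i - a⟫_𝕜) := by
        have e1 : X - a = (X - x i) + (x i - a) := by abel
        have e2 : x i - c = (2⁻¹ : 𝕜) • ((x i - a) - (X - x i)) := by
          rw [hc]
          module
        rw [e1, e2, norm_smul]
        have h3 : ‖(X - x i) + (x i - a)‖^2 = ‖X - x i‖^2 + 2 * RCLike.re (⟪X - x i, x i - a⟫_𝕜) + ‖x i - a‖^2 := by
          rw [@norm_add_sq 𝕜]
        have h4 : ‖(x i - a) - (X - x i)‖^2 = ‖x i - a‖^2 - 2 * RCLike.re (⟪x i - a, X - x i⟫_𝕜) + ‖X - x i‖^2 := by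
          rw [@norm_sub_sq 𝕜]
        have h5 : RCLike.re (⟪x i - a, X - x i⟫_𝕜) = RCLike.re (⟪X - x i, x i - a⟫_𝕜) := by
          exact inner_re_symm _ _
        rw [h5] at h4
        simp only [norm_inv, Real.norm_ofNat, RCLike.norm_ofNat]
        rw [div_pow, mul_pow, h3, h4]
        norm_num
        ring
      nlinarith [hx i]
    calc ∑ i, p i * ‖x i - xbar‖ ^ 2
        = ∑ i, p i * ‖(x i - c) - ∑ j, (p j : 𝕜) • (x j - c)‖ ^ 2 := hshift
      _ = ∑ i, p i * ‖x i - c‖ ^ 2 - ‖∑ j, (p j : 𝕜) • (x j - c)‖ ^ 2 := hvar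
      _ ≤ ∑ i, p i * ‖x i - c‖ ^ 2 := by
          have : (0:ℝ) ≤ ‖∑ j, (p j : 𝕜) • (x j - c)‖ ^ 2 := by positivity
          linarith
      _ ≤ ∑ i, p i * (‖X - a‖ / 2) ^ 2 := by
          apply sum_le_sum
          intro i _
          exact mul_le_mul_of_nonneg_left (hbound i) (hp i)
      _ = (‖X - a‖ / 2) ^ 2 := by rw [← sum_mul, hp1, one_mul]
  -- Combine
  refine step2.trans (cs.trans ?_)
  rw [hA]
  have h6 : Real.sqrt (∑ i, p i * ‖x i - xbar‖ ^ 2) ≤ ‖X - a‖ / 2 := by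
    rw [show ‖X - a‖ / 2 = Real.sqrt ((‖X - a‖ / 2) ^ 2) by
      rw [Real.sqrt_sq (by positivity)]]
    exact Real.sqrt_le_sqrt hB
  calc Real.sqrt (∑ i, p i * ‖α i‖ ^ 2 - ‖abar‖ ^ 2)
        * Real.sqrt (∑ i, p i * ‖x i - xbar‖ ^ 2)
      ≤ Real.sqrt (∑ i, p i * ‖α i‖ ^ 2 - ‖abar‖ ^ 2) * (‖X - a‖ / 2) :=
        mul_le_mul_of_nonneg_left h6 (Real.sqrt_nonneg _)
    _ = 1 / 2 * ‖X - a‖ * Real.sqrt (∑ i, p i * ‖α i‖ ^ 2 - ‖abar‖ ^ 2) := by ring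
end

section
/- Let α₁,…,αₙ ∈ ℂ, a, A ∈ ℂ with |αᵢ - (a+A)/2| ≤ (1/2)|A - a| for all i, and let (pᵢ) be a probability sequence. Then |Σᵢ pᵢαᵢ² - (Σᵢ pᵢαᵢ)²| ≤ (1/2)|A - a| Σᵢ pᵢ|αᵢ - Σⱼ pⱼαⱼ| ≤ (1/2)|A - a| (Σᵢ pᵢ|αᵢ|² - |Σᵢ pᵢαᵢ|²)^{1/2}. -/
/-!
With `m = ∑ pᵢ αᵢ` and `c = (a + A) / 2`, the weights summing to one give
`∑ pᵢ αᵢ² - m² = ∑ pᵢ (αᵢ - m)(αᵢ - c)`, and `|αᵢ - c| ≤ |A - a| / 2` bounds this by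
`|A - a| / 2 · ∑ pᵢ |αᵢ - m|`. The second inequality is Cauchy–Schwarz,
`(∑ pᵢ |αᵢ - m|)² ≤ ∑ pᵢ |αᵢ - m|²`, together with the weighted variance identity
`∑ pᵢ |αᵢ - m|² = ∑ pᵢ |αᵢ|² - |m|²`.
-/

open Finset

variable {ι : Type*} (s : Finset ι)

theorem sum_mul_sq_sub_sq_eq_sum_mul_sub_mul_sub {R : Type*} [CommRing R] (w x : ι → R)
    (hw : ∑ i ∈ s, w i = 1) (c : R) :
    ∑ i ∈ s, w i * x i ^ 2 - (∑ i ∈ s, w i * x i) ^ 2 =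
      ∑ i ∈ s, w i * ((x i - ∑ j ∈ s, w j * x j) * (x i - c)) := by
  set m := ∑ j ∈ s, w j * x j
  have hexpand : ∀ i, w i * ((x i - m) * (x i - c)) =
      w i * x i ^ 2 - (c + m) * (w i * x i) + m * c * w i := fun i => by ring
  rw [sum_congr rfl fun i _ => hexpand i, sum_add_distrib, sum_sub_distrib, ← mul_sum,
    ← mul_sum, hw]
  ring

theorem norm_sum_mul_mul_le {𝕜 : Type*} [RCLike 𝕜] (p : ι → ℝ) (hp : ∀ i ∈ s, 0 ≤ p i)
    (u v : ι → 𝕜) {r : ℝ} (hv : ∀ i ∈ s, ‖v i‖ ≤ r) :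
    ‖∑ i ∈ s, (p i : 𝕜) * (u i * v i)‖ ≤ r * ∑ i ∈ s, p i * ‖u i‖ := by
  rw [mul_sum]
  refine (norm_sum_le _ _).trans (sum_le_sum fun i hi => ?_)
  rw [norm_mul, norm_mul, RCLike.norm_ofReal, abs_of_nonneg (hp i hi)]
  have := mul_le_mul_of_nonneg_left (hv i hi) (mul_nonneg (hp i hi) (norm_nonneg (u i)))
  linarith

theorem norm_sum_mul_sq_sub_sq_le {𝕜 : Type*} [RCLike 𝕜] (p : ι → ℝ)
    (hp : ∀ i ∈ s, 0 ≤ p i) (hp1 : ∑ i ∈ s, p i = 1) (x : ι → 𝕜) {c : 𝕜} {r : ℝ}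
    (hx : ∀ i ∈ s, ‖x i - c‖ ≤ r) :
    ‖∑ i ∈ s, (p i : 𝕜) * x i ^ 2 - (∑ i ∈ s, (p i : 𝕜) * x i) ^ 2‖ ≤
      r * ∑ i ∈ s, p i * ‖x i - ∑ j ∈ s, (p j : 𝕜) * x j‖ := by
  have hw : ∑ i ∈ s, (p i : 𝕜) = 1 := by exact_mod_cast hp1
  rw [sum_mul_sq_sub_sq_eq_sum_mul_sub_mul_sub s _ x hw c]
  exact norm_sum_mul_mul_le s p hp _ _ hx

section InnerProductSpace

variable {E : Type*} [NormedAddCommGroup E] [InnerProductSpace ℝ E]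

theorem sum_smul_norm_sub_sq_eq (p : ι → ℝ) (hp1 : ∑ i ∈ s, p i = 1) (x : ι → E) :
    ∑ i ∈ s, p i * ‖x i - ∑ j ∈ s, p j • x j‖ ^ 2 =
      ∑ i ∈ s, p i * ‖x i‖ ^ 2 - ‖∑ j ∈ s, p j • x j‖ ^ 2 := by
  set m := ∑ j ∈ s, p j • x j
  have hcross : ∑ i ∈ s, p i * inner ℝ (x i) m = ‖m‖ ^ 2 := by
    simp only [← real_inner_smul_left, ← sum_inner, m, real_inner_self_eq_norm_sq]
  simp only [norm_sub_sq_real, mul_add, mul_sub, sum_add_distrib, sum_sub_distrib, ← sum_mul,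
    hp1, mul_left_comm _ (2 : ℝ), ← mul_sum, hcross]
  ring

theorem sum_mul_norm_sub_le_sqrt (p : ι → ℝ) (hp : ∀ i ∈ s, 0 ≤ p i)
    (hp1 : ∑ i ∈ s, p i = 1) (x : ι → E) :
    ∑ i ∈ s, p i * ‖x i - ∑ j ∈ s, p j • x j‖ ≤
      Real.sqrt (∑ i ∈ s, p i * ‖x i‖ ^ 2 - ‖∑ j ∈ s, p j • x j‖ ^ 2) := by
  rw [← sum_smul_norm_sub_sq_eq s p hp1]
  refine Real.le_sqrt_of_sq_le ?_
  calc (∑ i ∈ s, p i * ‖x i - ∑ j ∈ s, p j • x j‖) ^ 2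
      ≤ (∑ i ∈ s, p i) * ∑ i ∈ s, p i * ‖x i - ∑ j ∈ s, p j • x j‖ ^ 2 :=
        sum_sq_le_sum_mul_sum_of_sq_le_mul s hp
          (fun i hi => mul_nonneg (hp i hi) (sq_nonneg _)) fun i _ => le_of_eq (by ring)
    _ = _ := by rw [hp1, one_mul]

end InnerProductSpace

theorem stmt15 (n : ℕ) (α : Fin n → ℂ) (a A : ℂ)
    (hα : ∀ i, ‖α i - (a + A) / 2‖ ≤ ‖A - a‖ / 2)
    (p : Fin n → ℝ) (hp : ∀ i, 0 ≤ p i) (hp1 : ∑ i, p i = 1) :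
    ‖∑ i, (p i : ℂ) * α i ^ 2 - (∑ i, (p i : ℂ) * α i) ^ 2‖ ≤
      (1 / 2) * ‖A - a‖ *
        ∑ i, p i * ‖α i - ∑ j, (p j : ℂ) * α j‖ ∧
    (1 / 2) * ‖A - a‖ *
        ∑ i, p i * ‖α i - ∑ j, (p j : ℂ) * α j‖ ≤
      (1 / 2) * ‖A - a‖ *
        Real.sqrt (∑ i, p i * ‖α i‖ ^ 2 -
          ‖∑ i, (p i : ℂ) * α i‖ ^ 2) := by
  have hr : (1 / 2) * ‖A - a‖ = ‖A - a‖ / 2 := by ring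
  have hmean : ∑ j, (p j : ℂ) * α j = ∑ j, p j • α j := by simp only [Complex.real_smul]
  refine ⟨hr ▸ norm_sum_mul_sq_sub_sq_le _ p (fun i _ => hp i) hp1 α fun i _ => hα i, ?_⟩
  rw [hmean]
  exact mul_le_mul_of_nonneg_left (sum_mul_norm_sub_le_sqrt _ p (fun i _ => hp i) hp1 α)
    (by positivity)
end

section
/- Let H be a real inner product space, F : H → ℝ convex and Fréchet differentiable with gradient ∇F satisfying F(x) - F(y) ≥ ⟨∇F(y), x - y⟩ for all x, y ∈ H. Let z₁,…,zₙ ∈ H, q₁,…,qₙ ≥ 0 with Qₙ = Σᵢ qᵢ > 0. Then 0 ≤ (1/Qₙ)Σᵢ qᵢ F(zᵢ) - F((1/Qₙ)Σᵢ qᵢzᵢ) ≤ (1/Qₙ)Σᵢ qᵢ⟨∇F(zᵢ), zᵢ⟩ - ⟨(1/Qₙ)Σᵢ qᵢ∇F(zᵢ), (1/Qₙ)Σᵢ qᵢzᵢ⟩. -/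
/-! Both bounds come from summing the weighted subgradient inequality with `z̄ = Q⁻¹ ∑ qᵢ zᵢ`:
`F zᵢ - F z̄ ≥ ⟪∇F z̄, zᵢ - z̄⟫` sums to the lower bound since `∑ qᵢ (zᵢ - z̄) = 0`, and
`F z̄ - F zᵢ ≥ ⟪∇F zᵢ, z̄ - zᵢ⟫` sums to the upper one. -/

open scoped RealInnerProductSpace

open Finset

def IsSubgradientMap {H : Type*} [NormedAddCommGroup H] [InnerProductSpace ℝ H]
    (F : H → ℝ) (G : H → H) : Prop :=
  ∀ x y : H, ⟪G y, x - y⟫ ≤ F x - F y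

namespace IsSubgradientMap

variable {H ι : Type*} [NormedAddCommGroup H] [InnerProductSpace ℝ H]
  {F : H → ℝ} {G : H → H} {s : Finset ι} {q : ι → ℝ} (z : ι → H)

theorem inner_sum_smul_sub_le (hG : IsSubgradientMap F G) (hq : ∀ i ∈ s, 0 ≤ q i) (y : H) :
    ⟪G y, ∑ i ∈ s, q i • z i - (∑ i ∈ s, q i) • y⟫ ≤
      ∑ i ∈ s, q i * F (z i) - (∑ i ∈ s, q i) * F y :=
  calc ⟪G y, ∑ i ∈ s, q i • z i - (∑ i ∈ s, q i) • y⟫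
      = ∑ i ∈ s, q i * ⟪G y, z i - y⟫ := by
        simp only [sum_smul, ← sum_sub_distrib, ← smul_sub, inner_sum, inner_smul_right]
    _ ≤ ∑ i ∈ s, q i * (F (z i) - F y) :=
        sum_le_sum fun i hi => mul_le_mul_of_nonneg_left (hG _ _) (hq i hi)
    _ = ∑ i ∈ s, q i * F (z i) - (∑ i ∈ s, q i) * F y := by
        simp only [mul_sub, sum_sub_distrib, sum_mul]

theorem sum_mul_sub_le_sum_inner (hG : IsSubgradientMap F G) (hq : ∀ i ∈ s, 0 ≤ q i) (y : H) :
    ∑ i ∈ s, q i * F (z i) - (∑ i ∈ s, q i) * F y ≤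
      ∑ i ∈ s, q i * ⟪G (z i), z i⟫ - ⟪∑ i ∈ s, q i • G (z i), y⟫ :=
  calc ∑ i ∈ s, q i * F (z i) - (∑ i ∈ s, q i) * F y
      = ∑ i ∈ s, q i * (F (z i) - F y) := by
        simp only [mul_sub, sum_sub_distrib, sum_mul]
    _ ≤ ∑ i ∈ s, q i * ⟪G (z i), z i - y⟫ := by
        refine sum_le_sum fun i hi => mul_le_mul_of_nonneg_left ?_ (hq i hi)
        have h := hG y (z i)
        rw [← neg_sub, inner_neg_right] at h
        linarith
    _ = ∑ i ∈ s, q i * ⟪G (z i), z i⟫ - ⟪∑ i ∈ s, q i • G (z i), y⟫ := by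
        simp only [inner_sub_right, mul_sub, sum_sub_distrib, sum_inner, inner_smul_left,
          RCLike.conj_to_real]

end IsSubgradientMap

theorem stmt16_general {H : Type*} [NormedAddCommGroup H] [InnerProductSpace ℝ H]
    (F : H → ℝ) (G : H → H)
    (hgrad : ∀ x y : H, ⟪G y, x - y⟫ ≤ F x - F y)
    (n : ℕ) (z : Fin n → H) (q : Fin n → ℝ) (hq : ∀ i, 0 ≤ q i)
    (Q : ℝ) (hQ : Q = ∑ i, q i) (hQpos : 0 < Q) :
    0 ≤ (1 / Q) * ∑ i, q i * F (z i) - F ((1 / Q) • ∑ i, q i • z i) ∧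
      (1 / Q) * ∑ i, q i * F (z i) - F ((1 / Q) • ∑ i, q i • z i) ≤
        (1 / Q) * ∑ i, q i * ⟪G (z i), z i⟫ -
          ⟪(1 / Q) • ∑ i, q i • G (z i), (1 / Q) • ∑ i, q i • z i⟫ := by
  have hG : IsSubgradientMap F G := hgrad
  have hq' : ∀ i ∈ univ, 0 ≤ q i := fun i _ => hq i
  set zb := (1 / Q) • ∑ i, q i • z i
  have hQzb : Q • zb = ∑ i, q i • z i := by
    rw [smul_smul, mul_one_div_cancel hQpos.ne', one_smul]
  have lower := hG.inner_sum_smul_sub_le z hq' zb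
  have upper := hG.sum_mul_sub_le_sum_inner z hq' zb
  rw [← hQ, hQzb, sub_self, inner_zero_right] at lower
  rw [← hQ] at upper
  have hQinv : 0 ≤ 1 / Q := by positivity
  constructor
  · simpa [mul_sub, ← mul_assoc, hQpos.ne'] using mul_nonneg hQinv lower
  · have := mul_le_mul_of_nonneg_left upper hQinv
    simpa [mul_sub, ← mul_assoc, hQpos.ne', real_inner_smul_left] using this

theorem stmt16 {H : Type*} [NormedAddCommGroup H] [InnerProductSpace ℝ H]
    (F : H → ℝ) (G : H → H) (hconv : ConvexOn ℝ Set.univ F)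
    (hgrad : ∀ x y : H, ⟪G y, x - y⟫ ≤ F x - F y)
    (n : ℕ) (z : Fin n → H) (q : Fin n → ℝ) (hq : ∀ i, 0 ≤ q i)
    (Q : ℝ) (hQ : Q = ∑ i, q i) (hQpos : 0 < Q) :
    0 ≤ (1 / Q) * ∑ i, q i * F (z i) - F ((1 / Q) • ∑ i, q i • z i) ∧
      (1 / Q) * ∑ i, q i * F (z i) - F ((1 / Q) • ∑ i, q i • z i) ≤
        (1 / Q) * ∑ i, q i * ⟪G (z i), z i⟫ -
          ⟪(1 / Q) • ∑ i, q i • G (z i), (1 / Q) • ∑ i, q i • z i⟫ :=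
  stmt16_general F G hgrad n z q hq Q hQ hQpos
end

section
/- Let H be a real inner product space, F : H → ℝ convex and differentiable with gradient ∇F. Let z₁,…,zₙ ∈ H, q₁,…,qₙ ≥ 0 with Qₙ = Σᵢ qᵢ > 0, and suppose m, M ∈ H satisfy ‖∇F(zᵢ) - (m+M)/2‖ ≤ (1/2)‖M - m‖ for all i. Then 0 ≤ (1/Qₙ)Σᵢ qᵢ F(zᵢ) - F((1/Qₙ)Σᵢ qᵢzᵢ) ≤ (1/2)‖M - m‖ · (1/Qₙ)Σᵢ qᵢ‖zᵢ - (1/Qₙ)Σⱼ qⱼzⱼ‖ ≤ (1/2)‖M - m‖ [(1/Qₙ)Σᵢ qᵢ‖zᵢ‖² - ‖(1/Qₙ)Σᵢ qᵢzᵢ‖²]^{1/2}. -/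
/-!
Let `σ` be the weighted mean of the `zᵢ`. The deviations `zᵢ - σ` have weighted sum zero, so every
linear functional `⟪c, ·⟫` averages to zero over them. Averaging the gradient inequality at `σ`
therefore gives Jensen's inequality, while averaging it at the points `zᵢ` bounds the Jensen gap by
the average of `⟪∇F(zᵢ) - c, zᵢ - σ⟫` for any `c`; with `c = (m + M) / 2` each term is at most
`‖M - m‖ / 2 · ‖zᵢ - σ‖`. The last inequality is Cauchy–Schwarz together with the variance identity
`∑ qᵢ ‖zᵢ - σ‖² = ∑ qᵢ ‖zᵢ‖² - Q ‖σ‖²`.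
-/

open scoped RealInnerProductSpace
open Finset

namespace Finset

section Module

variable {ι R E : Type*} [Field R] [AddCommGroup E] [Module R E] {t : Finset ι} {w : ι → R}

lemma sum_smul_sub_centerMass (hw : ∑ i ∈ t, w i ≠ 0) (z : ι → E) :
    ∑ i ∈ t, w i • (z i - t.centerMass w z) = 0 := by
  rw [sum_congr rfl fun i _ => smul_sub (w i) (z i) _, sum_sub_distrib, ← sum_smul, centerMass,
    smul_smul, mul_inv_cancel₀ hw, one_smul, sub_self]

lemma inv_sum_mul_sum_mul_sub (hw : ∑ i ∈ t, w i ≠ 0) (a : ι → R) (b : R) :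
    (∑ i ∈ t, w i)⁻¹ * ∑ i ∈ t, w i * a i - b =
      (∑ i ∈ t, w i)⁻¹ * ∑ i ∈ t, w i * (a i - b) := by
  rw [sum_congr rfl fun i _ => mul_sub (w i) (a i) b, sum_sub_distrib, ← sum_mul, mul_sub,
    inv_mul_cancel_left₀ hw]

end Module

variable {ι H : Type*} [NormedAddCommGroup H] [InnerProductSpace ℝ H]
  {t : Finset ι} {w : ι → ℝ} {z : ι → H}

lemma sum_mul_inner_sub_centerMass (hw : ∑ i ∈ t, w i ≠ 0) (c : H) :
    ∑ i ∈ t, w i * ⟪c, z i - t.centerMass w z⟫ = 0 := by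
  simp_rw [← real_inner_smul_right, ← inner_sum, sum_smul_sub_centerMass hw, inner_zero_right]

lemma sum_mul_norm_sub_centerMass_sq (hw : ∑ i ∈ t, w i ≠ 0) :
    ∑ i ∈ t, w i * ‖z i - t.centerMass w z‖ ^ 2 =
      ∑ i ∈ t, w i * ‖z i‖ ^ 2 - (∑ i ∈ t, w i) * ‖t.centerMass w z‖ ^ 2 := by
  set σ := t.centerMass w z
  have hexpand (x : H) : ‖x - σ‖ ^ 2 = ‖x‖ ^ 2 - 2 * ⟪σ, x - σ⟫ - ‖σ‖ ^ 2 := by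
    rw [norm_sub_sq_real, inner_sub_right, real_inner_self_eq_norm_sq, real_inner_comm]
    ring
  calc ∑ i ∈ t, w i * ‖z i - σ‖ ^ 2
      = ∑ i ∈ t, w i * ‖z i‖ ^ 2 - 2 * ∑ i ∈ t, w i * ⟪σ, z i - σ⟫ -
          (∑ i ∈ t, w i) * ‖σ‖ ^ 2 := by
        simp only [hexpand, mul_sum, sum_mul, ← sum_sub_distrib]
        exact sum_congr rfl fun i _ => by ring
    _ = ∑ i ∈ t, w i * ‖z i‖ ^ 2 - (∑ i ∈ t, w i) * ‖σ‖ ^ 2 := by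
        rw [sum_mul_inner_sub_centerMass hw, mul_zero, sub_zero]

lemma inv_sum_mul_sum_mul_norm_sub_centerMass_le_sqrt (hw₀ : ∀ i ∈ t, 0 ≤ w i)
    (hw : 0 < ∑ i ∈ t, w i) :
    (∑ i ∈ t, w i)⁻¹ * ∑ i ∈ t, w i * ‖z i - t.centerMass w z‖ ≤
      √((∑ i ∈ t, w i)⁻¹ * ∑ i ∈ t, w i * ‖z i‖ ^ 2 - ‖t.centerMass w z‖ ^ 2) := by
  set σ := t.centerMass w z
  set W := ∑ i ∈ t, w i
  have hvar : W⁻¹ * ∑ i ∈ t, w i * ‖z i‖ ^ 2 - ‖σ‖ ^ 2 =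
      W⁻¹ * ∑ i ∈ t, w i * ‖z i - σ‖ ^ 2 := by
    rw [sum_mul_norm_sub_centerMass_sq hw.ne', mul_sub, inv_mul_cancel_left₀ hw.ne']
  have hcs : (∑ i ∈ t, w i * ‖z i - σ‖) ^ 2 ≤ W * ∑ i ∈ t, w i * ‖z i - σ‖ ^ 2 :=
    sum_sq_le_sum_mul_sum_of_sq_le_mul t hw₀
      (fun i hi => mul_nonneg (hw₀ i hi) (sq_nonneg _)) fun i _ => le_of_eq (by ring)
  have hW₀ : 0 ≤ W⁻¹ := inv_nonneg.2 hw.le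
  rw [hvar, Real.le_sqrt
    (mul_nonneg hW₀ (sum_nonneg fun i hi => mul_nonneg (hw₀ i hi) (norm_nonneg _)))
    (mul_nonneg hW₀ (sum_nonneg fun i hi => mul_nonneg (hw₀ i hi) (sq_nonneg _)))]
  calc (W⁻¹ * ∑ i ∈ t, w i * ‖z i - σ‖) ^ 2
      = W⁻¹ ^ 2 * (∑ i ∈ t, w i * ‖z i - σ‖) ^ 2 := mul_pow _ _ _
    _ ≤ W⁻¹ ^ 2 * (W * ∑ i ∈ t, w i * ‖z i - σ‖ ^ 2) := by gcongr
    _ = W⁻¹ * ∑ i ∈ t, w i * ‖z i - σ‖ ^ 2 := by field_simp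

section Gradient

variable {F : H → ℝ} {G : H → H}

lemma map_centerMass_le_inv_sum_mul_sum (hgrad : ∀ x y, ⟪G y, x - y⟫ ≤ F x - F y)
    (hw₀ : ∀ i ∈ t, 0 ≤ w i) (hw : 0 < ∑ i ∈ t, w i) :
    F (t.centerMass w z) ≤ (∑ i ∈ t, w i)⁻¹ * ∑ i ∈ t, w i * F (z i) := by
  set σ := t.centerMass w z
  have hgap : 0 ≤ ∑ i ∈ t, w i * (F (z i) - F σ) :=
    calc 0 = ∑ i ∈ t, w i * ⟪G σ, z i - σ⟫ := (sum_mul_inner_sub_centerMass hw.ne' _).symm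
      _ ≤ ∑ i ∈ t, w i * (F (z i) - F σ) :=
        sum_le_sum fun i hi => mul_le_mul_of_nonneg_left (hgrad _ _) (hw₀ i hi)
  rw [← sub_nonneg, inv_sum_mul_sum_mul_sub hw.ne']
  exact mul_nonneg (inv_nonneg.2 hw.le) hgap

lemma inv_sum_mul_sum_sub_map_centerMass_le (hgrad : ∀ x y, ⟪G y, x - y⟫ ≤ F x - F y)
    (hw₀ : ∀ i ∈ t, 0 ≤ w i) (hw : 0 < ∑ i ∈ t, w i)
    {c : H} {r : ℝ} (hc : ∀ i ∈ t, ‖G (z i) - c‖ ≤ r) :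
    (∑ i ∈ t, w i)⁻¹ * ∑ i ∈ t, w i * F (z i) - F (t.centerMass w z) ≤
      r * ((∑ i ∈ t, w i)⁻¹ * ∑ i ∈ t, w i * ‖z i - t.centerMass w z‖) := by
  set σ := t.centerMass w z
  have hterm : ∀ i ∈ t, F (z i) - F σ ≤ ⟪G (z i) - c, z i - σ⟫ + ⟪c, z i - σ⟫ := fun i _ => by
    have := hgrad σ (z i)
    rw [← neg_sub, inner_neg_right] at this
    rw [inner_sub_left]
    linarith
  have hgap : ∑ i ∈ t, w i * (F (z i) - F σ) ≤ r * ∑ i ∈ t, w i * ‖z i - σ‖ :=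
    calc ∑ i ∈ t, w i * (F (z i) - F σ)
        ≤ ∑ i ∈ t, (w i * (r * ‖z i - σ‖) + w i * ⟪c, z i - σ⟫) := by
          refine sum_le_sum fun i hi => ?_
          rw [← mul_add]
          refine mul_le_mul_of_nonneg_left ((hterm i hi).trans ?_) (hw₀ i hi)
          gcongr
          exact (real_inner_le_norm _ _).trans
            (mul_le_mul_of_nonneg_right (hc i hi) (norm_nonneg _))
      _ = r * ∑ i ∈ t, w i * ‖z i - σ‖ := by
          rw [sum_add_distrib, sum_mul_inner_sub_centerMass hw.ne', add_zero, mul_sum]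
          exact sum_congr rfl fun i _ => by ring
  rw [inv_sum_mul_sum_mul_sub hw.ne', mul_left_comm]
  exact mul_le_mul_of_nonneg_left hgap (inv_nonneg.2 hw.le)

end Gradient

end Finset

theorem stmt17_general {H : Type*} [NormedAddCommGroup H] [InnerProductSpace ℝ H]
    (F : H → ℝ) (G : H → H)
    (hgrad : ∀ x y : H, ⟪G y, x - y⟫ ≤ F x - F y)
    (n : ℕ) (z : Fin n → H) (q : Fin n → ℝ) (hq : ∀ i, 0 ≤ q i)
    (Q : ℝ) (hQ : Q = ∑ i, q i) (hQpos : 0 < Q) (m M : H)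
    (hm : ∀ i, ‖G (z i) - ((2 : ℝ)⁻¹) • (m + M)‖ ≤ ‖M - m‖ / 2) :
    0 ≤ (1 / Q) * ∑ i, q i * F (z i) - F ((1 / Q) • ∑ i, q i • z i) ∧
      (1 / Q) * ∑ i, q i * F (z i) - F ((1 / Q) • ∑ i, q i • z i) ≤
        (1 / 2) * ‖M - m‖ *
          ((1 / Q) * ∑ i, q i * ‖z i - (1 / Q) • ∑ j, q j • z j‖) ∧
      (1 / 2) * ‖M - m‖ *
          ((1 / Q) * ∑ i, q i * ‖z i - (1 / Q) • ∑ j, q j • z j‖) ≤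
        (1 / 2) * ‖M - m‖ *
          Real.sqrt ((1 / Q) * ∑ i, q i * ‖z i‖ ^ 2 -
            ‖(1 / Q) • ∑ i, q i • z i‖ ^ 2) := by
  subst hQ
  have hmean : (1 / ∑ i, q i) • ∑ i, q i • z i = univ.centerMass q z := by rw [one_div]; rfl
  have hq₀ : ∀ i ∈ univ, 0 ≤ q i := fun i _ => hq i
  rw [hmean, one_div]
  refine ⟨?_, ?_, ?_⟩
  · exact sub_nonneg.2 (map_centerMass_le_inv_sum_mul_sum hgrad hq₀ hQpos)
  · have := inv_sum_mul_sum_sub_map_centerMass_le hgrad hq₀ hQpos fun i _ => hm i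
    linarith
  · exact mul_le_mul_of_nonneg_left
      (inv_sum_mul_sum_mul_norm_sub_centerMass_le_sqrt hq₀ hQpos) (by positivity)

theorem stmt17 {H : Type*} [NormedAddCommGroup H] [InnerProductSpace ℝ H]
    (F : H → ℝ) (G : H → H) (hconv : ConvexOn ℝ Set.univ F)
    (hgrad : ∀ x y : H, ⟪G y, x - y⟫ ≤ F x - F y)
    (n : ℕ) (z : Fin n → H) (q : Fin n → ℝ) (hq : ∀ i, 0 ≤ q i)
    (Q : ℝ) (hQ : Q = ∑ i, q i) (hQpos : 0 < Q) (m M : H)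
    (hm : ∀ i, ‖G (z i) - ((2 : ℝ)⁻¹) • (m + M)‖ ≤ ‖M - m‖ / 2) :
    0 ≤ (1 / Q) * ∑ i, q i * F (z i) - F ((1 / Q) • ∑ i, q i • z i) ∧
      (1 / Q) * ∑ i, q i * F (z i) - F ((1 / Q) • ∑ i, q i • z i) ≤
        (1 / 2) * ‖M - m‖ *
          ((1 / Q) * ∑ i, q i * ‖z i - (1 / Q) • ∑ j, q j • z j‖) ∧
      (1 / 2) * ‖M - m‖ *
          ((1 / Q) * ∑ i, q i * ‖z i - (1 / Q) • ∑ j, q j • z j‖) ≤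
        (1 / 2) * ‖M - m‖ *
          Real.sqrt ((1 / Q) * ∑ i, q i * ‖z i‖ ^ 2 -
            ‖(1 / Q) • ∑ i, q i • z i‖ ^ 2) :=
  stmt17_general F G hgrad n z q hq Q hQ hQpos m M hm
end

section
/- Let H be a real inner product space, F : H → ℝ convex and differentiable with gradient ∇F, z₁,…,zₙ ∈ H, q₁,…,qₙ ≥ 0 with Qₙ = Σᵢ qᵢ > 0. Suppose m, M ∈ H satisfy ⟨∇F(zᵢ) - m, M - ∇F(zᵢ)⟩ ≥ 0 for all i, and z, Z ∈ H satisfy ⟨zᵢ - z, Z - zᵢ⟩ ≥ 0 for all i. Then 0 ≤ (1/Qₙ)Σᵢ qᵢ F(zᵢ) - F((1/Qₙ)Σᵢ qᵢzᵢ) ≤ (1/4)‖M - m‖ ‖Z - z‖. -/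
open scoped RealInnerProductSpace

lemma quarter {H : Type*} [NormedAddCommGroup H] [InnerProductSpace ℝ H]
    (m M x : H) : ⟪x - m, M - x⟫ ≤ (1/4)*‖M - m‖^2 := by
  have h1 : ‖(M - x) + (x - m)‖^2 = ‖M-x‖^2 + 2*⟪M-x, x-m⟫ + ‖x-m‖^2 :=
    norm_add_sq_real _ _
  have h2 : (0:ℝ) ≤ ‖(M - x) - (x - m)‖^2 := sq_nonneg _
  have h3 : ‖(M - x) - (x - m)‖^2 = ‖M-x‖^2 - 2*⟪M-x, x-m⟫ + ‖x-m‖^2 :=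
    norm_sub_sq_real _ _
  have h4 : (M - x) + (x - m) = M - m := by abel
  have h5 : ⟪x - m, M - x⟫ = ⟪M - x, x - m⟫ := real_inner_comm _ _
  rw [h4] at h1
  nlinarith

lemma var_bound {H : Type*} [NormedAddCommGroup H] [InnerProductSpace ℝ H]
    (n : ℕ) (p : Fin n → ℝ) (hp : ∀ i, 0 ≤ p i) (hps : ∑ i, p i = 1)
    (a : Fin n → H) (m M : H) (hm : ∀ i, 0 ≤ ⟪a i - m, M - a i⟫) :
    ∑ i, p i * ‖a i - ∑ j, p j • a j‖^2 ≤ (1/4)*‖M - m‖^2 := by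
  set A : H := ∑ j, p j • a j with hA
  have hinA : ∀ x : H, ⟪A, x⟫ = ∑ i, p i * ⟪a i, x⟫ := by
    intro x
    rw [hA, sum_inner]
    exact Finset.sum_congr rfl fun i _ => real_inner_smul_left _ _ _
  have hexp : ∀ i, ‖a i - A‖^2 = ‖a i‖^2 - 2*⟪a i, A⟫ + ‖A‖^2 :=
    fun i => norm_sub_sq_real _ _
  have hsum1 : ∑ i, p i * ‖a i - A‖^2
      = (∑ i, p i * ‖a i‖^2) - 2*‖A‖^2 + ‖A‖^2 := by
    have hAA : ∑ i, p i * ⟪a i, A⟫ = ‖A‖^2 := by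
      rw [← hinA, real_inner_self_eq_norm_sq]
    calc ∑ i, p i * ‖a i - A‖^2
        = ∑ i, (p i * ‖a i‖^2 - 2*(p i * ⟪a i, A⟫) + p i * ‖A‖^2) := by
          refine Finset.sum_congr rfl fun i _ => ?_
          rw [hexp i]; ring
      _ = (∑ i, p i * ‖a i‖^2) - 2*(∑ i, p i * ⟪a i, A⟫) + (∑ i, p i) * ‖A‖^2 := by
          rw [Finset.sum_add_distrib, Finset.sum_sub_distrib, ← Finset.mul_sum,
            ← Finset.sum_mul]
      _ = _ := by rw [hAA, hps]; ring
  have hmi : ∀ i, ⟪a i - m, M - a i⟫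
      = ⟪a i, M⟫ - ‖a i‖^2 - ⟪m, M⟫ + ⟪m, a i⟫ := by
    intro i
    rw [inner_sub_left, inner_sub_right, inner_sub_right,
      real_inner_self_eq_norm_sq]
    ring
  have hsum2 : (0:ℝ) ≤ ∑ i, p i * ⟪a i - m, M - a i⟫ :=
    Finset.sum_nonneg fun i _ => mul_nonneg (hp i) (hm i)
  have hsum3 : ∑ i, p i * ⟪a i - m, M - a i⟫
      = ⟪A, M⟫ - (∑ i, p i * ‖a i‖^2) - ⟪m, M⟫ + ⟪m, A⟫ := by
    have h1 : ∑ i, p i * ⟪a i, M⟫ = ⟪A, M⟫ := (hinA M).symm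
    have h2 : ∑ i, p i * ⟪m, a i⟫ = ⟪m, A⟫ := by
      rw [hA, inner_sum]
      exact (Finset.sum_congr rfl fun i _ => by
        rw [real_inner_smul_right]).symm
    calc ∑ i, p i * ⟪a i - m, M - a i⟫
        = ∑ i, (p i * ⟪a i, M⟫ - p i * ‖a i‖^2 - p i * ⟪m, M⟫ + p i * ⟪m, a i⟫) := by
          refine Finset.sum_congr rfl fun i _ => ?_
          rw [hmi i]; ring
      _ = (∑ i, p i * ⟪a i, M⟫) - (∑ i, p i * ‖a i‖^2)
            - (∑ i, p i) * ⟪m, M⟫ + ∑ i, p i * ⟪m, a i⟫ := by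
          rw [Finset.sum_add_distrib, Finset.sum_sub_distrib,
            Finset.sum_sub_distrib, ← Finset.sum_mul]
      _ = _ := by rw [h1, h2, hps]; ring
  have hAmM : ⟪A - m, M - A⟫ = ⟪A, M⟫ - ‖A‖^2 - ⟪m, M⟫ + ⟪m, A⟫ := by
    rw [inner_sub_left, inner_sub_right, inner_sub_right,
      real_inner_self_eq_norm_sq]
    ring
  have hq := quarter m M A
  linarith [hsum2, hsum3 ▸ hsum2]

theorem stmt18 {H : Type*} [NormedAddCommGroup H] [InnerProductSpace ℝ H]
    (F : H → ℝ) (G : H → H) (hconv : ConvexOn ℝ Set.univ F)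
    (hgrad : ∀ x y : H, ⟪G y, x - y⟫ ≤ F x - F y)
    (n : ℕ) (z : Fin n → H) (q : Fin n → ℝ) (hq : ∀ i, 0 ≤ q i)
    (Q : ℝ) (hQ : Q = ∑ i, q i) (hQpos : 0 < Q) (m M zl Z : H)
    (hm : ∀ i, 0 ≤ ⟪G (z i) - m, M - G (z i)⟫)
    (hz : ∀ i, 0 ≤ ⟪z i - zl, Z - z i⟫) :
    0 ≤ (1 / Q) * ∑ i, q i * F (z i) - F ((1 / Q) • ∑ i, q i • z i) ∧
      (1 / Q) * ∑ i, q i * F (z i) - F ((1 / Q) • ∑ i, q i • z i) ≤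
        (1 / 4) * ‖M - m‖ * ‖Z - zl‖ := by
  set p : Fin n → ℝ := fun i => q i / Q with hpdef
  have hp0 : ∀ i, 0 ≤ p i := fun i => div_nonneg (hq i) hQpos.le
  have hps : ∑ i, p i = 1 := by
    simp only [hpdef, div_eq_mul_inv, ← Finset.sum_mul, ← hQ]
    field_simp
  have hxb : (1 / Q) • ∑ i, q i • z i = ∑ i, p i • z i := by
    rw [Finset.smul_sum]
    refine Finset.sum_congr rfl fun i _ => ?_
    rw [smul_smul, hpdef]
    congr 1
    field_simp
  have hFb : (1 / Q) * ∑ i, q i * F (z i) = ∑ i, p i * F (z i) := by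
    rw [Finset.mul_sum]
    refine Finset.sum_congr rfl fun i _ => ?_
    rw [hpdef]
    field_simp
  set B : H := ∑ i, p i • z i with hB
  set a : Fin n → H := fun i => G (z i) with ha
  set A : H := ∑ i, p i • a i with hA
  have hzero : ∑ i, p i • (z i - B) = 0 := by
    simp only [smul_sub, Finset.sum_sub_distrib, ← Finset.sum_smul, hps, one_smul,
      ← hB, sub_self]
  have hinzero : ∀ w : H, ∑ i, p i * ⟪w, z i - B⟫ = 0 := by
    intro w
    have : ⟪w, ∑ i, p i • (z i - B)⟫ = ∑ i, p i * ⟪w, z i - B⟫ := by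
      rw [inner_sum]
      exact Finset.sum_congr rfl fun i _ => real_inner_smul_right _ _ _
    rw [hzero] at this
    simpa using this.symm
  rw [hxb, hFb]
  constructor
  · -- lower bound
    have h1 : ∀ i, p i * ⟪G B, z i - B⟫ ≤ p i * (F (z i) - F B) :=
      fun i => mul_le_mul_of_nonneg_left (hgrad (z i) B) (hp0 i)
    have h2 : ∑ i, p i * ⟪G B, z i - B⟫ ≤ ∑ i, p i * (F (z i) - F B) :=
      Finset.sum_le_sum fun i _ => h1 i
    rw [hinzero (G B)] at h2
    have h3 : ∑ i, p i * (F (z i) - F B)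
        = (∑ i, p i * F (z i)) - F B := by
      simp only [mul_sub, Finset.sum_sub_distrib, ← Finset.sum_mul, hps, one_mul]
    linarith [h3 ▸ h2]
  · -- upper bound
    have hstep : (∑ i, p i * F (z i)) - F B ≤ ∑ i, p i * ⟪a i - A, z i - B⟫ := by
      have h1 : ∀ i, p i * (F (z i) - F B) ≤ p i * ⟪a i, z i - B⟫ := by
        intro i
        have := hgrad B (z i)
        have heq : ⟪G (z i), B - z i⟫ = -⟪a i, z i - B⟫ := by
          rw [ha, ← inner_neg_right, neg_sub]
        refine mul_le_mul_of_nonneg_left ?_ (hp0 i)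
        rw [heq] at this
        linarith
      have h2 : ∑ i, p i * (F (z i) - F B) ≤ ∑ i, p i * ⟪a i, z i - B⟫ :=
        Finset.sum_le_sum fun i _ => h1 i
      have h3 : ∑ i, p i * (F (z i) - F B)
          = (∑ i, p i * F (z i)) - F B := by
        simp only [mul_sub, Finset.sum_sub_distrib, ← Finset.sum_mul, hps, one_mul]
      have h4 : ∀ i, ⟪a i, z i - B⟫ = ⟪a i - A, z i - B⟫ + ⟪A, z i - B⟫ := by
        intro i
        rw [inner_sub_left]; ring
      have h5 : ∑ i, p i * ⟪a i, z i - B⟫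
          = (∑ i, p i * ⟪a i - A, z i - B⟫) + ∑ i, p i * ⟪A, z i - B⟫ := by
        rw [← Finset.sum_add_distrib]
        refine Finset.sum_congr rfl fun i _ => ?_
        rw [h4 i]; ring
      rw [hinzero A, add_zero] at h5
      linarith [h3 ▸ h2, h5 ▸ h2]
    -- Cauchy-Schwarz
    set V1 : ℝ := ∑ i, p i * ‖a i - A‖^2 with hV1
    set V2 : ℝ := ∑ i, p i * ‖z i - B‖^2 with hV2
    have hCS : ∑ i, p i * ⟪a i - A, z i - B⟫ ≤ Real.sqrt V1 * Real.sqrt V2 := by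
      have h1 : ∑ i, p i * ⟪a i - A, z i - B⟫
          ≤ ∑ i, (Real.sqrt (p i) * ‖a i - A‖) * (Real.sqrt (p i) * ‖z i - B‖) := by
        refine Finset.sum_le_sum fun i _ => ?_
        have : (Real.sqrt (p i) * ‖a i - A‖) * (Real.sqrt (p i) * ‖z i - B‖)
            = p i * (‖a i - A‖ * ‖z i - B‖) := by
          rw [show (Real.sqrt (p i) * ‖a i - A‖) * (Real.sqrt (p i) * ‖z i - B‖)
            = (Real.sqrt (p i) * Real.sqrt (p i)) * (‖a i - A‖ * ‖z i - B‖) by ring,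
            Real.mul_self_sqrt (hp0 i)]
        rw [this]
        exact mul_le_mul_of_nonneg_left (real_inner_le_norm _ _) (hp0 i)
      have h2 := Finset.sum_mul_sq_le_sq_mul_sq Finset.univ
        (fun i => Real.sqrt (p i) * ‖a i - A‖) (fun i => Real.sqrt (p i) * ‖z i - B‖)
      have h3 : ∑ i, (Real.sqrt (p i) * ‖a i - A‖)^2 = V1 := by
        refine Finset.sum_congr rfl fun i _ => ?_
        rw [mul_pow, Real.sq_sqrt (hp0 i)]
      have h4 : ∑ i, (Real.sqrt (p i) * ‖z i - B‖)^2 = V2 := by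
        refine Finset.sum_congr rfl fun i _ => ?_
        rw [mul_pow, Real.sq_sqrt (hp0 i)]
      rw [h3, h4] at h2
      have hS0 : 0 ≤ ∑ i, (Real.sqrt (p i) * ‖a i - A‖) * (Real.sqrt (p i) * ‖z i - B‖) :=
        Finset.sum_nonneg fun i _ => mul_nonneg
          (mul_nonneg (Real.sqrt_nonneg _) (norm_nonneg _))
          (mul_nonneg (Real.sqrt_nonneg _) (norm_nonneg _))
      have hV10 : 0 ≤ V1 := Finset.sum_nonneg fun i _ =>
        mul_nonneg (hp0 i) (sq_nonneg _)
      have hV20 : 0 ≤ V2 := Finset.sum_nonneg fun i _ =>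
        mul_nonneg (hp0 i) (sq_nonneg _)
      have hsq : Real.sqrt V1 * Real.sqrt V2 = Real.sqrt (V1 * V2) :=
        (Real.sqrt_mul hV10 _).symm
      have h5 : ∑ i, (Real.sqrt (p i) * ‖a i - A‖) * (Real.sqrt (p i) * ‖z i - B‖)
          ≤ Real.sqrt (V1 * V2) := by
        rw [← Real.sqrt_sq hS0]
        exact Real.sqrt_le_sqrt h2
      rw [hsq]
      linarith
    have hVb1 : V1 ≤ (1/4)*‖M - m‖^2 := var_bound n p hp0 hps a m M hm
    have hVb2 : V2 ≤ (1/4)*‖Z - zl‖^2 := var_bound n p hp0 hps z zl Z hz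
    have hV10 : 0 ≤ V1 := Finset.sum_nonneg fun i _ =>
      mul_nonneg (hp0 i) (sq_nonneg _)
    have hV20 : 0 ≤ V2 := Finset.sum_nonneg fun i _ =>
      mul_nonneg (hp0 i) (sq_nonneg _)
    have hs1 : Real.sqrt V1 ≤ (1/2)*‖M - m‖ := by
      rw [show (1/2)*‖M - m‖ = Real.sqrt ((1/4)*‖M - m‖^2) by
        rw [show (1/4)*‖M - m‖^2 = ((1/2)*‖M - m‖)^2 by ring]
        exact (Real.sqrt_sq (by positivity)).symm]
      exact Real.sqrt_le_sqrt hVb1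
    have hs2 : Real.sqrt V2 ≤ (1/2)*‖Z - zl‖ := by
      rw [show (1/2)*‖Z - zl‖ = Real.sqrt ((1/4)*‖Z - zl‖^2) by
        rw [show (1/4)*‖Z - zl‖^2 = ((1/2)*‖Z - zl‖)^2 by ring]
        exact (Real.sqrt_sq (by positivity)).symm]
      exact Real.sqrt_le_sqrt hVb2
    have : Real.sqrt V1 * Real.sqrt V2 ≤ ((1/2)*‖M - m‖) * ((1/2)*‖Z - zl‖) :=
      mul_le_mul hs1 hs2 (Real.sqrt_nonneg _) (by positivity)
    calc (∑ i, p i * F (z i)) - F B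
        ≤ ∑ i, p i * ⟪a i - A, z i - B⟫ := hstep
      _ ≤ Real.sqrt V1 * Real.sqrt V2 := hCS
      _ ≤ ((1/2)*‖M - m‖) * ((1/2)*‖Z - zl‖) := this
      _ = (1/4) * ‖M - m‖ * ‖Z - zl‖ := by ring
end
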